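/- (Cube-root formulation.) Let k ≥ 0, D ≥ 1 be integers, c > 0 a real, and g : {0,…,k} × {1,…,D} → ℝ a matrix such that ∑_{i=0}^{k} g_{id}² > 0 for every d. Define s*_d := √c · (∑_{i=0}^{k} g_{id}²)^{1/3} / (∑_{d'=1}^{D} (∑_{i=0}^{k} g_{id'}²)^{2/3})^{1/2}. Then s* has strictly positive entries, ‖s*‖₂² = c, and for every s ∈ ℝ^D with s_d > 0 for all d and ‖s‖₂² ≤ c it holds that ∑_{i=0}^{k} ∑_{d=1}^{D} g_{id}²/s*_d ≤ ∑_{i=0}^{k} ∑_{d=1}^{D} g_{id}²/s_d. In particular, s_d ∝ (∑_{i=0}^{k} g_{id}²)^{1/3} solves min_s ∑_{i,d} g_{id}²/s_d subject to ‖s‖₂² ≤ c and s_d > 0. -/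

import Mathlib

open Finset

/-! With `a_d = ∑_i g_{id}²`, the objective is `∑_d a_d / s_d`, and `s*` is a positive multiple of
`a^{1/3}`, so `a_d = μ (s*_d)³` for some `μ > 0`. Minimality of `s*` then reduces to the bound
`3t² - s² ≤ 2t³/s` for `s > 0`, which says that `s ↦ t³/s + s²/2` is minimised at `s = t`: summed
over `d` with `t = s*`, it gives `∑ (s*_d)² ≤ ∑ (s*_d)³ / s_d` whenever `‖s‖₂ ≤ ‖s*‖₂`. -/

theorem three_mul_sq_sub_sq_le_two_mul_cube_div {t s : ℝ} (ht : 0 ≤ t) (hs : 0 < s) :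
    3 * t ^ 2 - s ^ 2 ≤ 2 * t ^ 3 / s := by
  rw [le_div_iff₀ hs]
  -- `s³ - 3t²s + 2t³ = (s - t)²(s + 2t)`
  nlinarith [mul_nonneg (sq_nonneg (s - t)) (by linarith : 0 ≤ s + 2 * t)]

theorem sum_sq_le_sum_cube_div {ι : Type*} (u : Finset ι) {t s : ι → ℝ}
    (ht : ∀ i ∈ u, 0 ≤ t i) (hs : ∀ i ∈ u, 0 < s i)
    (hst : ∑ i ∈ u, s i ^ 2 ≤ ∑ i ∈ u, t i ^ 2) :
    ∑ i ∈ u, t i ^ 2 ≤ ∑ i ∈ u, t i ^ 3 / s i := by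
  have h : ∑ i ∈ u, (3 * t i ^ 2 - s i ^ 2) ≤ ∑ i ∈ u, 2 * t i ^ 3 / s i :=
    sum_le_sum fun i hi => three_mul_sq_sub_sq_le_two_mul_cube_div (ht i hi) (hs i hi)
  simp only [sum_sub_distrib, ← mul_sum, mul_div_assoc] at h
  linarith

theorem sum_div_le_sum_div_of_eq_mul_cube {ι : Type*} (u : Finset ι) {a t s : ι → ℝ} {μ : ℝ}
    (hμ : 0 ≤ μ) (ha : ∀ i ∈ u, a i = μ * t i ^ 3) (ht : ∀ i ∈ u, 0 < t i)
    (hs : ∀ i ∈ u, 0 < s i) (hst : ∑ i ∈ u, s i ^ 2 ≤ ∑ i ∈ u, t i ^ 2) :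
    ∑ i ∈ u, a i / t i ≤ ∑ i ∈ u, a i / s i := by
  have hat : ∑ i ∈ u, a i / t i = μ * ∑ i ∈ u, t i ^ 2 := by
    rw [mul_sum]
    refine sum_congr rfl fun i hi => ?_
    rw [ha i hi]
    field_simp [(ht i hi).ne']
  have has : ∑ i ∈ u, a i / s i = μ * ∑ i ∈ u, t i ^ 3 / s i := by
    rw [mul_sum]
    exact sum_congr rfl fun i hi => by rw [ha i hi, mul_div_assoc]
  rw [hat, has]
  exact mul_le_mul_of_nonneg_left
    (sum_sq_le_sum_cube_div u (fun i hi => (ht i hi).le) hs hst) hμ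

theorem Real.rpow_one_div_three_pow_three {x : ℝ} (hx : 0 ≤ x) :
    (x ^ ((1 : ℝ) / 3)) ^ 3 = x := by
  simpa using Real.rpow_inv_natCast_pow (n := 3) hx (by norm_num)

theorem Real.rpow_one_div_three_sq {x : ℝ} (hx : 0 ≤ x) :
    (x ^ ((1 : ℝ) / 3)) ^ 2 = x ^ ((2 : ℝ) / 3) := by
  rw [← Real.rpow_mul_natCast hx]
  norm_num

/-- Cube-root formulation: `s*_d ∝ (∑_i g_{id}²)^{1/3}` (normalized so that `‖s*‖₂² = c`)
solves `min_s ∑_{i,d} g_{id}²/s_d` subject to `‖s‖₂² ≤ c` and `s_d > 0`. -/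
theorem cube_root_formulation (k D : ℕ) (hD : 1 ≤ D) (c : ℝ) (hc : 0 < c)
    (g : Fin (k + 1) → Fin D → ℝ)
    (hg : ∀ d : Fin D, 0 < ∑ i : Fin (k + 1), (g i d) ^ 2)
    (sstar : Fin D → ℝ)
    (hsstar : ∀ d : Fin D, sstar d =
      Real.sqrt c * (∑ i : Fin (k + 1), (g i d) ^ 2) ^ ((1 : ℝ) / 3) /
        (∑ d' : Fin D, (∑ i : Fin (k + 1), (g i d') ^ 2) ^ ((2 : ℝ) / 3)) ^ ((1 : ℝ) / 2)) :
    (∀ d : Fin D, 0 < sstar d) ∧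
      (∑ d : Fin D, (sstar d) ^ 2 = c) ∧
      ∀ s : Fin D → ℝ, (∀ d, 0 < s d) → (∑ d : Fin D, (s d) ^ 2 ≤ c) →
        ∑ i : Fin (k + 1), ∑ d : Fin D, (g i d) ^ 2 / sstar d
          ≤ ∑ i : Fin (k + 1), ∑ d : Fin D, (g i d) ^ 2 / s d := by
  set a : Fin D → ℝ := fun d => ∑ i : Fin (k + 1), (g i d) ^ 2
  set S := ∑ d : Fin D, a d ^ ((2 : ℝ) / 3)
  have : Nonempty (Fin D) := Fin.pos_iff_nonempty.mp hD
  have hS : 0 < S := sum_pos (fun d _ => Real.rpow_pos_of_pos (hg d) _) univ_nonempty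
  set κ := Real.sqrt c / Real.sqrt S
  have hκ : 0 < κ := by positivity
  have hsstar_eq : ∀ d, sstar d = κ * a d ^ ((1 : ℝ) / 3) := fun d => by
    rw [hsstar d, ← Real.sqrt_eq_rpow]; ring
  have hpos : ∀ d, 0 < sstar d := fun d => by
    rw [hsstar_eq d]; exact mul_pos hκ (Real.rpow_pos_of_pos (hg d) _)
  have hnorm : ∑ d, sstar d ^ 2 = c := by
    have hsq : ∀ d, sstar d ^ 2 = κ ^ 2 * a d ^ ((2 : ℝ) / 3) := fun d => by
      rw [hsstar_eq d, mul_pow, Real.rpow_one_div_three_sq (hg d).le]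
    rw [sum_congr rfl fun d _ => hsq d, ← mul_sum, div_pow, Real.sq_sqrt hc.le, Real.sq_sqrt hS.le, div_mul_cancel₀ c hS.ne']
  refine ⟨hpos, hnorm, fun s hs hsc => ?_⟩
  simp only [sum_comm (γ := Fin (k + 1)), ← sum_div]
  refine sum_div_le_sum_div_of_eq_mul_cube univ (μ := (κ ^ 3)⁻¹) (by positivity)
    (fun d _ => ?_) (fun d _ => hpos d) (fun d _ => hs d) (hnorm ▸ hsc)
  rw [hsstar_eq d, mul_pow, Real.rpow_one_div_three_pow_three (hg d).le, inv_mul_cancel_left₀]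
  positivity
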